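/- arXiv:2107.07914 — 4 statements merged into one kernel-verified Lean document; each statement's English description precedes it below -/
import Mathlib

section
/- Let d ≥ 1, let P be a finite nonempty set of points in ℝ^d, let α > 0 and let p, q be integers with 1 ≤ p ≤ q. Suppose r is a real number with r ≥ α/2 such that there exist points x₁, …, x_p ∈ ℝ^d with P contained in the union of the closed balls B(x_i, r). Then there exist points c₁, …, c_p, d₁, …, d_q ∈ ℝ^d (repetitions allowed) such that: (I) ‖c_i − d_j‖ ≥ α for all 1 ≤ i ≤ p and 1 ≤ j ≤ q; and (II) P is contained in the union of the closed balls B(c_i, 7r) over i = 1,…,p, and P is contained in the union of the closed balls B(d_j, 7r) over j = 1,…,q. -/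
lemma coord_le_dist {d : ℕ} (i : Fin d) (x y : EuclideanSpace ℝ (Fin d)) :
    |x i - y i| ≤ dist x y := by
  have h := abs_real_inner_le_norm (EuclideanSpace.single i (1:ℝ)) (x - y)
  simp only [EuclideanSpace.norm_single, norm_one, one_mul] at h
  rw [real_inner_comm] at h
  rw [EuclideanSpace.inner_single_right] at h
  simpa [dist_eq_norm] using h

/-- Given `r ≥ α/2` and `p` balls of radius `r` covering `P ⊆ ℝ^d`,
there exist `p` red centers and `q` blue centers, pairwise `α`-separated across colors,
whose balls of radius `7r` (of each color) cover `P`. -/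
theorem stmt0 (d : ℕ) (hd : 1 ≤ d)
    (P : Finset (EuclideanSpace ℝ (Fin d))) (hP : P.Nonempty)
    (α : ℝ) (hα : 0 < α)
    (p q : ℕ) (hp : 1 ≤ p) (hpq : p ≤ q)
    (r : ℝ) (hr : α / 2 ≤ r)
    (x : Fin p → EuclideanSpace ℝ (Fin d))
    (hcov : ∀ z ∈ P, ∃ i, z ∈ Metric.closedBall (x i) r) :
    ∃ (c : Fin p → EuclideanSpace ℝ (Fin d)) (e : Fin q → EuclideanSpace ℝ (Fin d)),
      (∀ i j, α ≤ dist (c i) (e j)) ∧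
      (∀ z ∈ P, ∃ i, z ∈ Metric.closedBall (c i) (7 * r)) ∧
      (∀ z ∈ P, ∃ j, z ∈ Metric.closedBall (e j) (7 * r)) := by
  have hr0 : 0 < r := lt_of_lt_of_le (by linarith) hr
  set i0 : Fin d := ⟨0, hd⟩
  set u : EuclideanSpace ℝ (Fin d) := EuclideanSpace.single i0 (1:ℝ) with hu
  have hun : ‖u‖ = 1 := by simp [hu]
  -- rounding functions
  set f : ℝ → ℝ := fun a => 8 * r * (round (a / (8 * r)) : ℤ) with hf
  set g : ℝ → ℝ := fun a => f (a - 4 * r) + 4 * r with hg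
  have h8 : (0:ℝ) < 8 * r := by linarith
  have hfclose : ∀ a : ℝ, |f a - a| ≤ 4 * r := by
    intro a
    have := abs_sub_round (a / (8 * r))
    have ha : f a - a = 8 * r * ((round (a / (8 * r)) : ℝ) - a / (8 * r)) := by
      have : 8 * r * (a / (8 * r)) = a := by field_simp
      simp only [hf]; linarith [this]
    rw [ha, abs_mul, abs_of_pos h8, abs_sub_comm]
    nlinarith
  have hgclose : ∀ a : ℝ, |g a - a| ≤ 4 * r := by
    intro a
    have := hfclose (a - 4 * r)
    simp only [hg]
    convert this using 2
    ring
  -- the centers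
  set c : Fin p → EuclideanSpace ℝ (Fin d) :=
    fun i => x i + (f (x i i0) - x i i0) • u with hc
  have hg' : ∀ i : Fin q, (i : ℕ) % p < p := fun i => Nat.mod_lt _ hp
  set σ : Fin q → Fin p := fun j => ⟨(j : ℕ) % p, hg' j⟩ with hσ
  set e : Fin q → EuclideanSpace ℝ (Fin d) :=
    fun j => x (σ j) + (g (x (σ j) i0) - x (σ j) i0) • u with he
  have hcoord : ∀ (y : EuclideanSpace ℝ (Fin d)) (t : ℝ),
      (y + (t - y i0) • u) i0 = t := by
    intro y t
    have : u i0 = 1 := by simp [hu, EuclideanSpace.single_apply]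
    simp only [PiLp.add_apply, PiLp.smul_apply, this, smul_eq_mul]
    ring
  have hdc : ∀ i, dist (c i) (x i) ≤ 4 * r := by
    intro i
    rw [hc]
    simp only [dist_eq_norm, add_sub_cancel_left, norm_smul, hun, mul_one]
    exact hfclose _
  have hde : ∀ j, dist (e j) (x (σ j)) ≤ 4 * r := by
    intro j
    rw [he]
    simp only [dist_eq_norm, add_sub_cancel_left, norm_smul, hun, mul_one]
    exact hgclose _
  refine ⟨c, e, ?_, ?_, ?_⟩
  · intro i j
    have hci : (c i) i0 = f (x i i0) := hcoord _ _
    have hej : (e j) i0 = g (x (σ j) i0) := hcoord _ _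
    have key : 4 * r ≤ |(c i) i0 - (e j) i0| := by
      rw [hci, hej]
      set k : ℤ := round (x i i0 / (8 * r))
      set m : ℤ := round ((x (σ j) i0 - 4 * r) / (8 * r))
      have : f (x i i0) - g (x (σ j) i0) = 4 * r * (2 * (k - m) - 1) := by
        simp only [hf, hg]
        push_cast
        ring
      rw [this, abs_mul]
      have h1 : (1:ℝ) ≤ |((2 * (k - m) - 1 : ℤ) : ℝ)| := by
        rw [← Int.cast_abs]
        exact_mod_cast Int.one_le_abs (by omega)
      have h2 : |(2 * ((k:ℝ) - m) - 1)| = |((2 * (k - m) - 1 : ℤ) : ℝ)| := by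
        push_cast; ring_nf
      rw [abs_of_pos (by linarith : (0:ℝ) < 4 * r)]
      nlinarith [abs_nonneg ((2 * ((k:ℝ) - m) - 1))]
    have := coord_le_dist i0 (c i) (e j)
    linarith
  · intro z hz
    obtain ⟨i, hi⟩ := hcov z hz
    refine ⟨i, ?_⟩
    rw [Metric.mem_closedBall] at hi ⊢
    calc dist z (c i) ≤ dist z (x i) + dist (x i) (c i) := dist_triangle _ _ _
      _ ≤ r + 4 * r := add_le_add hi (by rw [dist_comm]; exact hdc i)
      _ ≤ 7 * r := by linarith
  · intro z hz
    obtain ⟨i, hi⟩ := hcov z hz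
    refine ⟨⟨(i : ℕ), lt_of_lt_of_le i.2 hpq⟩, ?_⟩
    have hσi : σ ⟨(i : ℕ), lt_of_lt_of_le i.2 hpq⟩ = i := by
      simp [hσ, Nat.mod_eq_of_lt i.2]
    have h1 : dist (x i) (e ⟨(i : ℕ), lt_of_lt_of_le i.2 hpq⟩) ≤ 4 * r := by
      have h2 := hde ⟨(i : ℕ), lt_of_lt_of_le i.2 hpq⟩
      rw [hσi] at h2
      rw [dist_comm]; exact h2
    rw [Metric.mem_closedBall] at hi ⊢
    calc dist z (e ⟨(i : ℕ), lt_of_lt_of_le i.2 hpq⟩)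
        ≤ dist z (x i) + dist (x i) (e ⟨(i : ℕ), lt_of_lt_of_le i.2 hpq⟩) :=
          dist_triangle _ _ _
      _ ≤ r + 4 * r := add_le_add hi h1
      _ ≤ 7 * r := by linarith
end

section
/- Let d ≥ 1, let P be a finite nonempty set of points in ℝ^d, let α > 0, and let p, q be integers with 1 ≤ p ≤ q. Suppose there exist points x₁, …, x_p on the line ℓ such that P is contained in the union of the closed balls B(x_i, r), and set r' = max(r, α/2). Then there exists a feasible solution for the (p ∧ q, α) problem with all p + q centers lying on ℓ and covering radius at most 4r'. -/
/-- A point of `ℝ^d` lies on the line `ℓ` (the x-axis) iff all coordinates other than the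
first vanish. -/
def OnAxis {d : ℕ} (x : EuclideanSpace ℝ (Fin d)) : Prop :=
  ∀ j : Fin d, (j : ℕ) ≠ 0 → x j = 0

/-!
Move the given centers along `ℓ` onto two interleaved grids: the red centers onto the nearest
point of `2αℤ`, the blue ones onto the nearest point of `α + 2αℤ`. Each center moves by at
most `α`, so the covering radius grows from `r` to at most `r + α ≤ 3r'`, and any point of one
grid is at distance at least `α` from any point of the other. Since `q ≥ p`, the blue centers can
be indexed by a surjection `Fin q → Fin p`.
-/

open EuclideanSpace

noncomputable def gridRound (L a s : ℝ) : ℝ := L * round ((s - a) / L) + a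

theorem abs_sub_gridRound_le {L : ℝ} (hL : 0 < L) (a s : ℝ) :
    |s - gridRound L a s| ≤ L / 2 := by
  have key : s - gridRound L a s = L * ((s - a) / L - round ((s - a) / L)) := by
    unfold gridRound
    field_simp
    ring
  rw [key, abs_mul, abs_of_pos hL]
  nlinarith [abs_sub_round ((s - a) / L)]

theorem half_le_abs_intCast_sub_half (n : ℤ) : 1 / 2 ≤ |(n : ℝ) - 1 / 2| := by
  rcases le_or_gt n 0 with hn | hn
  · have : (n : ℝ) ≤ 0 := by exact_mod_cast hn
    rw [abs_of_neg (by linarith)]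
    linarith
  · have : (1 : ℝ) ≤ n := by exact_mod_cast hn
    rw [abs_of_pos (by linarith)]
    linarith

theorem half_le_abs_gridRound_sub_gridRound_half {L : ℝ} (hL : 0 ≤ L) (s t : ℝ) :
    L / 2 ≤ |gridRound L 0 s - gridRound L (L / 2) t| := by
  have key : gridRound L 0 s - gridRound L (L / 2) t
      = L * ((((round (s / L) - round ((t - L / 2) / L) : ℤ)) : ℝ) - 1 / 2) := by
    unfold gridRound
    push_cast
    ring_nf
  rw [key, abs_mul, abs_of_nonneg hL]
  nlinarith [half_le_abs_intCast_sub_half (round (s / L) - round ((t - L / 2) / L))]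

section Axis

variable {d : ℕ} (hd : 0 < d)

theorem onAxis_single (t : ℝ) : OnAxis (single (⟨0, hd⟩ : Fin d) t) := by
  intro j hj
  rw [PiLp.single_apply, if_neg (fun h => hj (by rw [h]))]

theorem OnAxis.eq_single {x : EuclideanSpace ℝ (Fin d)} (hx : OnAxis x) :
    x = single ⟨0, hd⟩ (x ⟨0, hd⟩) := by
  ext j
  by_cases hj : j = ⟨0, hd⟩
  · subst hj
    simp
  · rw [PiLp.single_apply, if_neg hj]
    exact hx j (fun h => hj (Fin.ext h))

theorem OnAxis.dist_single {x : EuclideanSpace ℝ (Fin d)} (hx : OnAxis x) (t : ℝ) :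
    dist x (single ⟨0, hd⟩ t) = |x ⟨0, hd⟩ - t| := by
  conv_lhs => rw [hx.eq_single hd]
  rw [PiLp.dist_single_same, Real.dist_eq]

theorem OnAxis.dist_single_gridRound_le {x z : EuclideanSpace ℝ (Fin d)} (hx : OnAxis x)
    {r L : ℝ} (hzx : dist z x ≤ r) (hL : 0 < L) (a : ℝ) :
    dist z (single ⟨0, hd⟩ (gridRound L a (x ⟨0, hd⟩))) ≤ r + L / 2 :=
  (dist_triangle _ _ _).trans <|
    add_le_add hzx ((hx.dist_single hd _).trans_le (abs_sub_gridRound_le hL a _))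

end Axis

theorem stmt5_general (d : ℕ) (hd : 1 ≤ d)
    (P : Finset (EuclideanSpace ℝ (Fin d)))
    (α : ℝ) (hα : 0 < α) (p q : ℕ) (hp : 1 ≤ p) (hpq : p ≤ q)
    (r : ℝ) (x : Fin p → EuclideanSpace ℝ (Fin d))
    (hax : ∀ i, OnAxis (x i))
    (hcov : ∀ z ∈ P, ∃ i, dist z (x i) ≤ r) :
    ∃ (c : Fin p → EuclideanSpace ℝ (Fin d)) (e : Fin q → EuclideanSpace ℝ (Fin d)),
      (∀ i, OnAxis (c i)) ∧ (∀ j, OnAxis (e j)) ∧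
      (∀ z ∈ P, ∃ i, dist z (c i) ≤ 4 * max r (α / 2)) ∧
      (∀ z ∈ P, ∃ j, dist z (e j) ≤ 4 * max r (α / 2)) ∧
      (∀ i j, α ≤ dist (c i) (e j)) := by
  have hL : 0 < 2 * α := by positivity
  have hradius : r + 2 * α / 2 ≤ 4 * max r (α / 2) := by
    have := le_max_left r (α / 2)
    have := le_max_right r (α / 2)
    linarith
  have : Nonempty (Fin p) := ⟨⟨0, hp⟩⟩
  obtain ⟨f, hf⟩ : ∃ f : Fin q → Fin p, f.Surjective :=
    ⟨_, Function.invFun_surjective (Fin.castLE_injective hpq)⟩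
  refine ⟨fun i => single ⟨0, hd⟩ (gridRound (2 * α) 0 (x i ⟨0, hd⟩)),
    fun j => single ⟨0, hd⟩ (gridRound (2 * α) (2 * α / 2) (x (f j) ⟨0, hd⟩)),
    fun _ => onAxis_single hd _, fun _ => onAxis_single hd _, ?_, ?_, ?_⟩
  · intro z hz
    obtain ⟨i, hi⟩ := hcov z hz
    exact ⟨i, ((hax i).dist_single_gridRound_le hd hi hL 0).trans hradius⟩
  · intro z hz
    obtain ⟨i, hi⟩ := hcov z hz
    obtain ⟨j, rfl⟩ := hf i
    exact ⟨j, ((hax (f j)).dist_single_gridRound_le hd hi hL _).trans hradius⟩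
  · intro i j
    rw [PiLp.dist_single_same, Real.dist_eq]
    have := half_le_abs_gridRound_sub_gridRound_half hL.le (x i ⟨0, hd⟩) (x (f j) ⟨0, hd⟩)
    linarith

/-- If `p` balls of radius `r` centered on the x-axis cover `P`, then with
`r' = max r (α/2)` there is a feasible solution of the `(p ∧ q, α)` problem with all `p + q`
centers on the x-axis and covering radius at most `4·r'`. -/
theorem stmt5 (d : ℕ) (hd : 1 ≤ d)
    (P : Finset (EuclideanSpace ℝ (Fin d))) (hP : P.Nonempty)
    (α : ℝ) (hα : 0 < α) (p q : ℕ) (hp : 1 ≤ p) (hpq : p ≤ q)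
    (r : ℝ) (x : Fin p → EuclideanSpace ℝ (Fin d))
    (hax : ∀ i, OnAxis (x i))
    (hcov : ∀ z ∈ P, ∃ i, dist z (x i) ≤ r) :
    ∃ (c : Fin p → EuclideanSpace ℝ (Fin d)) (e : Fin q → EuclideanSpace ℝ (Fin d)),
      (∀ i, OnAxis (c i)) ∧ (∀ j, OnAxis (e j)) ∧
      (∀ z ∈ P, ∃ i, dist z (c i) ≤ 4 * max r (α / 2)) ∧
      (∀ z ∈ P, ∃ j, dist z (e j) ≤ 4 * max r (α / 2)) ∧
      (∀ i j, α ≤ dist (c i) (e j)) :=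
  stmt5_general d hd P α hα p q hp hpq r x hax hcov
end

section
/- Let P be a finite nonempty set of points in ℝ^d, let α > 0, and let p, q ≥ 1 be integers. If r is a constrained-feasible radius, then there exists a feasible solution with covering radius r, all of whose red and blue centers lie on ℓ, such that the first coordinate of every center can be written as e + t·α for some endpoint e ∈ E(r) and some nonnegative integer t. -/
/-- The distance `d_i = sqrt(p_{i2}² + … + p_{id}²)` of a point of `ℝ^d` from the x-axis. -/
noncomputable def distToAxis {d : ℕ} (p : EuclideanSpace ℝ (Fin d)) : ℝ :=
  Real.sqrt (∑ j ∈ Finset.univ.filter (fun j : Fin d => (j : ℕ) ≠ 0), (p j) ^ 2)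

/-- The left endpoint `aᵢ(r) = p_{i1} − sqrt(r² − dᵢ²)`. -/
noncomputable def aEnd {d : ℕ} (hd : 0 < d) (p : EuclideanSpace ℝ (Fin d)) (r : ℝ) : ℝ :=
  p ⟨0, hd⟩ - Real.sqrt (r ^ 2 - distToAxis p ^ 2)

/-- The right endpoint `bᵢ(r) = p_{i1} + sqrt(r² − dᵢ²)`. -/
noncomputable def bEnd {d : ℕ} (hd : 0 < d) (p : EuclideanSpace ℝ (Fin d)) (r : ℝ) : ℝ :=
  p ⟨0, hd⟩ + Real.sqrt (r ^ 2 - distToAxis p ^ 2)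

/-- `E(r)`: the set of all endpoints `aᵢ(r)`, `bᵢ(r)` over points `pᵢ` with `dᵢ ≤ r`. -/
def Endpoints {d n : ℕ} (hd : 0 < d) (pts : Fin n → EuclideanSpace ℝ (Fin d))
    (r : ℝ) : Set ℝ :=
  {e | ∃ i : Fin n, distToAxis (pts i) ≤ r ∧
    (e = aEnd hd (pts i) r ∨ e = bEnd hd (pts i) r)}

/-- A feasible solution of the `(p ∧ q, α)` problem on the point set `{pts i}` with
covering radius `r`, all of whose centers lie on the x-axis. -/
def ConstrainedFeasible {d n : ℕ} (pts : Fin n → EuclideanSpace ℝ (Fin d))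
    (α : ℝ) (p q : ℕ) (r : ℝ) : Prop :=
  ∃ (c : Fin p → EuclideanSpace ℝ (Fin d)) (e : Fin q → EuclideanSpace ℝ (Fin d)),
    (∀ i, OnAxis (c i)) ∧ (∀ j, OnAxis (e j)) ∧
    (∀ k : Fin n, ∃ i, dist (pts k) (c i) ≤ r) ∧
    (∀ k : Fin n, ∃ j, dist (pts k) (e j) ≤ r) ∧
    (∀ i j, α ≤ dist (c i) (e j))


/-!
Snap every center to the left, onto the largest point not exceeding it of the grid
`{aₖ(r) + tα : t ∈ ℕ}`. A center on the axis covers `pₖ` exactly when its first coordinate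
lies in `[aₖ(r), bₖ(r)]`; snapping keeps it at least `aₖ(r)` and does not increase it, so
coverage survives. Snapping is monotone, and if `y + α ≤ x` then `snap y + α` is itself a grid
point below `x`, so `snap y + α ≤ snap x`: separation survives as well. Snapping needs some
`aₖ(r)` below the center, which holds for every center that covers a point; the other centers
are first replaced by a covering center of the same colour.
-/

section Axis

variable {d : ℕ} (hd : 0 < d)

lemma distToAxis_nonneg (p : EuclideanSpace ℝ (Fin d)) : 0 ≤ distToAxis p :=
  Real.sqrt_nonneg _

lemma sq_distToAxis (p : EuclideanSpace ℝ (Fin d)) :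
    distToAxis p ^ 2 = ∑ j ∈ Finset.univ.filter (fun j : Fin d => (j : ℕ) ≠ 0), (p j) ^ 2 :=
  Real.sq_sqrt (Finset.sum_nonneg fun _ _ => sq_nonneg _)

lemma distToAxis_of_onAxis {x : EuclideanSpace ℝ (Fin d)} (hx : OnAxis x) :
    distToAxis x = 0 := by
  rw [distToAxis, Finset.sum_eq_zero fun j hj => by rw [hx j (Finset.mem_filter.1 hj).2]; ring,
    Real.sqrt_zero]

lemma dist_eq_sqrt_of_onAxis {P x : EuclideanSpace ℝ (Fin d)} (hx : OnAxis x) :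
    dist P x = √((P ⟨0, hd⟩ - x ⟨0, hd⟩) ^ 2 + distToAxis P ^ 2) := by
  rw [EuclideanSpace.dist_eq, sq_distToAxis,
    ← Finset.sum_filter_add_sum_filter_not Finset.univ (fun j : Fin d => (j : ℕ) = 0)]
  have hzero : Finset.univ.filter (fun j : Fin d => (j : ℕ) = 0) = {⟨0, hd⟩} := by
    ext j
    simp [Fin.ext_iff]
  rw [hzero, Finset.sum_singleton, Real.dist_eq, sq_abs]
  congr 2
  exact Finset.sum_congr rfl fun j hj => by
    rw [hx j (Finset.mem_filter.1 hj).2, Real.dist_eq, sub_zero, sq_abs]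

lemma dist_of_onAxis {x y : EuclideanSpace ℝ (Fin d)} (hx : OnAxis x) (hy : OnAxis y) :
    dist x y = |x ⟨0, hd⟩ - y ⟨0, hd⟩| := by
  rw [dist_eq_sqrt_of_onAxis hd hy, distToAxis_of_onAxis hx, zero_pow two_ne_zero, add_zero,
    Real.sqrt_sq_eq_abs]

lemma dist_le_iff_of_onAxis {P x : EuclideanSpace ℝ (Fin d)} {r : ℝ} (hx : OnAxis x) :
    dist P x ≤ r ↔ distToAxis P ≤ r ∧ aEnd hd P r ≤ x ⟨0, hd⟩ ∧ x ⟨0, hd⟩ ≤ bEnd hd P r := by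
  have hδ := distToAxis_nonneg P
  rw [dist_eq_sqrt_of_onAxis hd hx, Real.sqrt_le_iff, aEnd, bEnd]
  constructor
  · rintro ⟨hr, h⟩
    have hδr : distToAxis P ≤ r := by nlinarith
    obtain ⟨h₁, h₂⟩ := (Real.sq_le (by nlinarith)).1
      (show (x ⟨0, hd⟩ - P ⟨0, hd⟩) ^ 2 ≤ r ^ 2 - distToAxis P ^ 2 by nlinarith)
    exact ⟨hδr, by linarith, by linarith⟩
  · rintro ⟨hδr, h₁, h₂⟩
    have h := (Real.sq_le (by nlinarith)).2
      (⟨by linarith, by linarith⟩ : -√(r ^ 2 - distToAxis P ^ 2) ≤ x ⟨0, hd⟩ - P ⟨0, hd⟩ ∧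
        x ⟨0, hd⟩ - P ⟨0, hd⟩ ≤ √(r ^ 2 - distToAxis P ^ 2))
    exact ⟨hδ.trans hδr, by nlinarith⟩

end Axis

def axisPt (d : ℕ) (x : ℝ) : EuclideanSpace ℝ (Fin d) :=
  WithLp.toLp 2 fun j => if (j : ℕ) = 0 then x else 0

lemma onAxis_axisPt {d : ℕ} (x : ℝ) : OnAxis (axisPt d x) :=
  fun _ hj => if_neg hj

@[simp]
lemma axisPt_apply_zero {d : ℕ} (hd : 0 < d) (x : ℝ) : axisPt d x ⟨0, hd⟩ = x := by
  simp [axisPt]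

lemma add_floor_div_mul_le {α g x : ℝ} (hα : 0 < α) (hg : g ≤ x) :
    g + ⌊(x - g) / α⌋₊ * α ≤ x := by
  have h := Nat.floor_le (div_nonneg (sub_nonneg.2 hg) hα.le)
  rw [le_div_iff₀ hα] at h
  linarith

section Grid

variable (s : Finset ℝ) {α : ℝ}

/-- The largest point `≤ x` of the grid `s + αℕ`, if there is one. -/
noncomputable def gridFloor (α x : ℝ) : ℝ :=
  if h : (s.filter (· ≤ x)).Nonempty then
    (s.filter (· ≤ x)).sup' h fun g => g + ⌊(x - g) / α⌋₊ * α
  else x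

lemma gridFloor_le (hα : 0 < α) {x : ℝ} : gridFloor s α x ≤ x := by
  unfold gridFloor
  split_ifs
  · exact Finset.sup'_le _ _ fun g hg => add_floor_div_mul_le hα (Finset.mem_filter.1 hg).2
  · exact le_rfl

lemma le_gridFloor (hα : 0 < α) {g x : ℝ} (hg : g ∈ s) {t : ℕ} (h : g + t * α ≤ x) :
    g + t * α ≤ gridFloor s α x := by
  have hmem : g ∈ s.filter (· ≤ x) :=
    Finset.mem_filter.2 ⟨hg, le_trans (le_add_of_nonneg_right (by positivity)) h⟩
  have ht : t ≤ ⌊(x - g) / α⌋₊ := Nat.le_floor (by rw [le_div_iff₀ hα]; linarith)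
  rw [gridFloor, dif_pos ⟨g, hmem⟩]
  calc g + t * α ≤ g + ⌊(x - g) / α⌋₊ * α := by gcongr
    _ ≤ _ := Finset.le_sup' (fun g => g + ⌊(x - g) / α⌋₊ * α) hmem

lemma exists_eq_gridFloor {g x : ℝ} (hg : g ∈ s) (hgx : g ≤ x) :
    ∃ g' ∈ s, ∃ t : ℕ, gridFloor s α x = g' + t * α := by
  have hne : (s.filter (· ≤ x)).Nonempty := ⟨g, Finset.mem_filter.2 ⟨hg, hgx⟩⟩
  obtain ⟨g', hg', h⟩ := Finset.exists_mem_eq_sup' hne fun g => g + ⌊(x - g) / α⌋₊ * α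
  exact ⟨g', (Finset.mem_filter.1 hg').1, _, by rw [gridFloor, dif_pos hne, h]⟩

lemma gridFloor_add_le (hα : 0 < α) {x y : ℝ} (hy : ∃ g ∈ s, g ≤ y) (h : y + α ≤ x) :
    gridFloor s α y + α ≤ gridFloor s α x := by
  obtain ⟨g, hg, hgy⟩ := hy
  obtain ⟨g', hg', t, ht⟩ := exists_eq_gridFloor s (α := α) hg hgy
  have hle : g' + (t + 1 : ℕ) * α ≤ x := by
    push_cast
    linarith [gridFloor_le s hα (x := y)]
  have := le_gridFloor s hα hg' hle
  push_cast at this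
  linarith

lemma le_abs_gridFloor_sub (hα : 0 < α) {x y : ℝ} (hx : ∃ g ∈ s, g ≤ x)
    (hy : ∃ g ∈ s, g ≤ y) (h : α ≤ |x - y|) :
    α ≤ |gridFloor s α x - gridFloor s α y| := by
  rcases le_abs.1 h with h | h
  · have := gridFloor_add_le s hα (x := x) hy (by linarith)
    exact le_abs.2 (Or.inl (by linarith))
  · have := gridFloor_add_le s hα (x := y) hx (by linarith)
    exact le_abs.2 (Or.inr (by linarith))

end Grid

section Snap

variable {d : ℕ} (hd : 0 < d) (s : Finset ℝ) {α : ℝ}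

noncomputable def snapToGrid (α : ℝ) (x : EuclideanSpace ℝ (Fin d)) :
    EuclideanSpace ℝ (Fin d) :=
  axisPt d (gridFloor s α (x ⟨0, hd⟩))

lemma onAxis_snapToGrid (x : EuclideanSpace ℝ (Fin d)) : OnAxis (snapToGrid hd s α x) :=
  onAxis_axisPt _

@[simp]
lemma snapToGrid_apply_zero (x : EuclideanSpace ℝ (Fin d)) :
    snapToGrid hd s α x ⟨0, hd⟩ = gridFloor s α (x ⟨0, hd⟩) :=
  axisPt_apply_zero hd _

lemma dist_snapToGrid_le (hα : 0 < α) {P x : EuclideanSpace ℝ (Fin d)} {r : ℝ}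
    (hx : OnAxis x) (hs : aEnd hd P r ∈ s) (h : dist P x ≤ r) :
    dist P (snapToGrid hd s α x) ≤ r := by
  obtain ⟨hδ, ha, hb⟩ := (dist_le_iff_of_onAxis hd hx).1 h
  rw [dist_le_iff_of_onAxis hd (onAxis_snapToGrid hd s x), snapToGrid_apply_zero]
  exact ⟨hδ, by simpa using le_gridFloor s hα hs (t := 0) (by simpa using ha),
    (gridFloor_le s hα).trans hb⟩

lemma le_dist_snapToGrid (hα : 0 < α) {x y : EuclideanSpace ℝ (Fin d)}
    (hx : OnAxis x) (hy : OnAxis y) (hxs : ∃ g ∈ s, g ≤ x ⟨0, hd⟩)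
    (hys : ∃ g ∈ s, g ≤ y ⟨0, hd⟩) (h : α ≤ dist x y) :
    α ≤ dist (snapToGrid hd s α x) (snapToGrid hd s α y) := by
  rw [dist_of_onAxis hd hx hy] at h
  rw [dist_of_onAxis hd (onAxis_snapToGrid hd s x) (onAxis_snapToGrid hd s y),
    snapToGrid_apply_zero, snapToGrid_apply_zero]
  exact le_abs_gridFloor_sub s hα hxs hys h

end Snap

lemma exists_forall_mem_of_exists_mem {ι X : Type*} {S : Set X} (c : ι → X)
    (hS : ∃ i, c i ∈ S) :
    ∃ c' : ι → X, (∀ i, c' i ∈ S) ∧ (∀ i, ∃ i', c' i = c i') ∧ ∀ i, c i ∈ S → c' i = c i := by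
  classical
  obtain ⟨i₀, hi₀⟩ := hS
  refine ⟨fun i => if c i ∈ S then c i else c i₀, fun i => ?_, fun i => ?_, fun i hi => if_pos hi⟩
  · dsimp only
    split_ifs with h
    exacts [h, hi₀]
  · dsimp only
    split_ifs
    exacts [⟨i, rfl⟩, ⟨i₀, rfl⟩]

lemma ConstrainedFeasible.exists_forall_covers {d n : ℕ} {pts : Fin n → EuclideanSpace ℝ (Fin d)}
    {α : ℝ} {p q : ℕ} {r : ℝ} (hn : 0 < n) (h : ConstrainedFeasible pts α p q r) :
    ∃ (c : Fin p → EuclideanSpace ℝ (Fin d)) (e : Fin q → EuclideanSpace ℝ (Fin d)),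
      (∀ i, OnAxis (c i)) ∧ (∀ j, OnAxis (e j)) ∧
      (∀ k : Fin n, ∃ i, dist (pts k) (c i) ≤ r) ∧
      (∀ k : Fin n, ∃ j, dist (pts k) (e j) ≤ r) ∧
      (∀ i j, α ≤ dist (c i) (e j)) ∧
      (∀ i, ∃ k, dist (pts k) (c i) ≤ r) ∧ (∀ j, ∃ k, dist (pts k) (e j) ≤ r) := by
  obtain ⟨c, e, hc, he, hcc, hec, hsep⟩ := h
  obtain ⟨c', hc'S, hc'c, hc'eq⟩ := exists_forall_mem_of_exists_mem c
    (S := {x | ∃ k, dist (pts k) x ≤ r}) (let ⟨i, hi⟩ := hcc ⟨0, hn⟩; ⟨i, _, hi⟩)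
  obtain ⟨e', he'S, he'e, he'eq⟩ := exists_forall_mem_of_exists_mem e
    (S := {x | ∃ k, dist (pts k) x ≤ r}) (let ⟨j, hj⟩ := hec ⟨0, hn⟩; ⟨j, _, hj⟩)
  refine ⟨c', e', fun i => ?_, fun j => ?_, fun k => ?_, fun k => ?_, fun i j => ?_, hc'S, he'S⟩
  · obtain ⟨i', hi'⟩ := hc'c i
    exact hi' ▸ hc i'
  · obtain ⟨j', hj'⟩ := he'e j
    exact hj' ▸ he j'
  · obtain ⟨i, hi⟩ := hcc k
    exact ⟨i, by rwa [hc'eq i ⟨k, hi⟩]⟩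
  · obtain ⟨j, hj⟩ := hec k
    exact ⟨j, by rwa [he'eq j ⟨k, hj⟩]⟩
  · obtain ⟨i', hi'⟩ := hc'c i
    obtain ⟨j', hj'⟩ := he'e j
    rw [hi', hj']
    exact hsep i' j'

theorem stmt11_general (d n : ℕ) (hd : 0 < d) (hn : 0 < n)
    (pts : Fin n → EuclideanSpace ℝ (Fin d))
    (α : ℝ) (hα : 0 < α) (p q : ℕ)
    (r : ℝ) (hfeas : ConstrainedFeasible pts α p q r) :
    ∃ (c : Fin p → EuclideanSpace ℝ (Fin d)) (e : Fin q → EuclideanSpace ℝ (Fin d)),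
      (∀ i, OnAxis (c i)) ∧ (∀ j, OnAxis (e j)) ∧
      (∀ k : Fin n, ∃ i, dist (pts k) (c i) ≤ r) ∧
      (∀ k : Fin n, ∃ j, dist (pts k) (e j) ≤ r) ∧
      (∀ i j, α ≤ dist (c i) (e j)) ∧
      (∀ i, ∃ e₀ ∈ Endpoints hd pts r, ∃ t : ℕ, c i ⟨0, hd⟩ = e₀ + t * α) ∧
      (∀ j, ∃ e₀ ∈ Endpoints hd pts r, ∃ t : ℕ, e j ⟨0, hd⟩ = e₀ + t * α) := by
  obtain ⟨c, e, hc, he, hcc, hec, hsep, hcu, heu⟩ := hfeas.exists_forall_covers hn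
  set s := Finset.univ.image fun k => aEnd hd (pts k) r
  have hs (k : Fin n) : aEnd hd (pts k) r ∈ s := Finset.mem_image_of_mem _ (Finset.mem_univ k)
  have hsE : ∀ g ∈ s, g ∈ Endpoints hd pts r := by
    simp only [s, Finset.mem_image]
    rintro _ ⟨k, -, rfl⟩
    obtain ⟨i, hi⟩ := hcc k
    exact ⟨k, ((dist_le_iff_of_onAxis hd (hc i)).1 hi).1, Or.inl rfl⟩
  have hlow {x} (hx : OnAxis x) : (∃ k, dist (pts k) x ≤ r) → ∃ g ∈ s, g ≤ x ⟨0, hd⟩ :=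
    fun ⟨k, hk⟩ => ⟨_, hs k, ((dist_le_iff_of_onAxis hd hx).1 hk).2.1⟩
  have hgrid {x} (hx : OnAxis x) (hxc : ∃ k, dist (pts k) x ≤ r) :
      ∃ e₀ ∈ Endpoints hd pts r, ∃ t : ℕ, snapToGrid hd s α x ⟨0, hd⟩ = e₀ + t * α := by
    obtain ⟨g, hg, hgx⟩ := hlow hx hxc
    obtain ⟨g', hg', t, ht⟩ := exists_eq_gridFloor s (α := α) hg hgx
    exact ⟨g', hsE g' hg', t, by rw [snapToGrid_apply_zero, ht]⟩
  refine ⟨snapToGrid hd s α ∘ c, snapToGrid hd s α ∘ e, fun i => onAxis_snapToGrid hd s _,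
    fun j => onAxis_snapToGrid hd s _, fun k => ?_, fun k => ?_,
    fun i j => le_dist_snapToGrid hd s hα (hc i) (he j) (hlow (hc i) (hcu i))
      (hlow (he j) (heu j)) (hsep i j),
    fun i => hgrid (hc i) (hcu i), fun j => hgrid (he j) (heu j)⟩
  · obtain ⟨i, hi⟩ := hcc k
    exact ⟨i, dist_snapToGrid_le hd s hα (hc i) (hs k) hi⟩
  · obtain ⟨j, hj⟩ := hec k
    exact ⟨j, dist_snapToGrid_le hd s hα (he j) (hs k) hj⟩

/-- If `r` is a constrained-feasible radius, then there is a feasible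
solution with covering radius `r`, all centers on the x-axis, in which the first
coordinate of every center is of the form `e + t·α` with `e ∈ E(r)` an endpoint and
`t` a nonnegative integer. -/
theorem stmt11 (d n : ℕ) (hd : 0 < d) (hn : 0 < n)
    (pts : Fin n → EuclideanSpace ℝ (Fin d))
    (α : ℝ) (hα : 0 < α) (p q : ℕ) (hp : 1 ≤ p) (hq : 1 ≤ q)
    (r : ℝ) (hfeas : ConstrainedFeasible pts α p q r) :
    ∃ (c : Fin p → EuclideanSpace ℝ (Fin d)) (e : Fin q → EuclideanSpace ℝ (Fin d)),
      (∀ i, OnAxis (c i)) ∧ (∀ j, OnAxis (e j)) ∧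
      (∀ k : Fin n, ∃ i, dist (pts k) (c i) ≤ r) ∧
      (∀ k : Fin n, ∃ j, dist (pts k) (e j) ≤ r) ∧
      (∀ i j, α ≤ dist (c i) (e j)) ∧
      (∀ i, ∃ e₀ ∈ Endpoints hd pts r, ∃ t : ℕ, c i ⟨0, hd⟩ = e₀ + t * α) ∧
      (∀ j, ∃ e₀ ∈ Endpoints hd pts r, ∃ t : ℕ, e j ⟨0, hd⟩ = e₀ + t * α) :=
  stmt11_general d n hd hn pts α hα p q r hfeas
end

section
/- Let d_i, d_k ≥ 0 and γ > 0. There exists a real number r with r ≥ max(d_i, d_k) satisfying sqrt(r² − d_i²) + sqrt(r² − d_k²) = γ if and only if γ² ≥ |d_k² − d_i²|. -/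
/-!
Write `a = √(r² − dᵢ²)` and `b = √(r² − d_k²)`, so that `a² − b² = d_k² − dᵢ²`. For `a, b ≥ 0`
one has `|a² − b²| = |a − b| (a + b) ≤ (a + b)²`, which gives the necessity. Conversely, the
prescribed sum `a + b = γ` and difference of squares `a² − b² = D` determine
`a = (γ² + D) / (2γ)` and `b = (γ² − D) / (2γ)`, which are nonnegative exactly when `|D| ≤ γ²`;
then `r = √(dᵢ² + a²)` works.
-/

theorem abs_sub_le_sq_sqrt_add_sqrt {u v : ℝ} (hu : 0 ≤ u) (hv : 0 ≤ v) :
    |u - v| ≤ (√u + √v) ^ 2 := by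
  have hsu := Real.sq_sqrt hu
  have hsv := Real.sq_sqrt hv
  have hu' := Real.sqrt_nonneg u
  have hv' := Real.sqrt_nonneg v
  rw [abs_le]
  constructor <;> nlinarith

theorem exists_nonneg_add_eq_of_abs_le_sq {γ D : ℝ} (hγ : 0 < γ) (hD : |D| ≤ γ ^ 2) :
    ∃ a b : ℝ, 0 ≤ a ∧ 0 ≤ b ∧ a + b = γ ∧ a ^ 2 - b ^ 2 = D := by
  obtain ⟨hlo, hhi⟩ := abs_le.1 hD
  have h2γ : 0 < 2 * γ := by positivity
  refine ⟨(γ ^ 2 + D) / (2 * γ), (γ ^ 2 - D) / (2 * γ), div_nonneg (by linarith) h2γ.le,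
    div_nonneg (by linarith) h2γ.le, ?_, ?_⟩
  · field_simp
    ring
  · field_simp
    ring

/-- For `dᵢ, d_k ≥ 0` and `γ > 0`, there is an `r ≥ max dᵢ d_k` with
`sqrt(r² − dᵢ²) + sqrt(r² − d_k²) = γ` if and only if `γ² ≥ |d_k² − dᵢ²|`. -/
theorem stmt13 (di dk γ : ℝ) (hdi : 0 ≤ di) (hdk : 0 ≤ dk) (hγ : 0 < γ) :
    (∃ r : ℝ, max di dk ≤ r ∧
      Real.sqrt (r ^ 2 - di ^ 2) + Real.sqrt (r ^ 2 - dk ^ 2) = γ) ↔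
    |dk ^ 2 - di ^ 2| ≤ γ ^ 2 := by
  constructor
  · rintro ⟨r, hr, rfl⟩
    have hi : 0 ≤ r ^ 2 - di ^ 2 := sub_nonneg.2 (pow_le_pow_left₀ hdi (le_of_max_le_left hr) 2)
    have hk : 0 ≤ r ^ 2 - dk ^ 2 := sub_nonneg.2 (pow_le_pow_left₀ hdk (le_of_max_le_right hr) 2)
    simpa only [sub_sub_sub_cancel_left] using abs_sub_le_sq_sqrt_add_sqrt hi hk
  · intro h
    obtain ⟨a, b, ha, hb, rfl, hsq⟩ := exists_nonneg_add_eq_of_abs_le_sq hγ h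
    have hr : √(di ^ 2 + a ^ 2) ^ 2 = di ^ 2 + a ^ 2 := Real.sq_sqrt (by positivity)
    refine ⟨√(di ^ 2 + a ^ 2), max_le ?_ ?_, ?_⟩
    · exact (le_abs_self di).trans (Real.abs_le_sqrt (le_add_of_nonneg_right (sq_nonneg a)))
    · exact (le_abs_self dk).trans (Real.abs_le_sqrt (by linarith [sq_nonneg b]))
    · rw [hr, add_sub_cancel_left, show di ^ 2 + a ^ 2 - dk ^ 2 = b ^ 2 by linarith,
        Real.sqrt_sq ha, Real.sqrt_sq hb]
end
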